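/- Suppose the F-algebra A has an S-stable basis, and let 𝒰 be a maximal chain of S-nice subalgebras of A. Then T = ∩_{R ∈ 𝒰} R is an S-subalgebra of A lying over S (T ∩ F = S) but T is not an S-nice subalgebra of A; that is, TF is a proper subalgebra of A. -/

import Mathlib

/-- A basis of `A` over `F`, as a set. -/
def IsBasisSet (F : Type*) {A : Type*} [Field F] [Ring A] [Algebra F A] (B : Set A) : Prop :=
  LinearIndependent F ((↑) : B → A) ∧ Submodule.span F B = ⊤

/-- `B` is an `S`-stable basis of `A` over `F`. -/
def IsStableBasis (S : Type*) (F : Type*) {A : Type*} [CommRing S] [Field F] [Ring A]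
    [Algebra S F] [Algebra F A] [Algebra S A] [IsScalarTower S F A] (B : Set A) : Prop :=
  IsBasisSet F B ∧ ∃ C : Set A, IsBasisSet F C ∧
    ∀ c ∈ C, ∀ b ∈ B, c * b ∈ Submodule.span S B

/-- `R` is an `S`-nice subalgebra of `A`: `R ∩ F = S` and `RF = A`. -/
def IsNice (S F : Type*) {A : Type*} [CommRing S] [Field F] [Ring A]
    [Algebra S F] [Algebra F A] [Algebra S A] [IsScalarTower S F A]
    (R : Subalgebra S A) : Prop :=
  (∀ x : F, algebraMap F A x ∈ R ↔ ∃ s : S, algebraMap S F s = x) ∧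
    Submodule.span F (R : Set A) = ⊤

/-!
Let `M` be the `S`-span of the stable basis `B`. Suppose `T = ⋂ 𝒰` satisfied `TF = A`. Take
`t ∈ T ∩ M` outside `F`; a `2 × 2` minor of the coordinates of `t` and of `d • 1 ∈ M` gives an
`F`-linear form `φ` that kills `1`, is `S`-valued on `M` and has `φ t = p ≠ 0`. Since `S` is not a
field, some `s ≠ 0` does not divide `d * p`. The subalgebra `S + (T ∩ {a | a M ⊆ s M})` is again
`S`-nice: elements of `F` stabilizing `M` lie in `S`, and a multiple of each element of `C`
stabilizes `M`. It does not contain `t`, since `φ` would then force `s ∣ d * p`. Being strictly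
below `T`, it could be added to the maximal chain `𝒰`, a contradiction. As `⋂ ∅ = A`, the same
argument shows `𝒰 ≠ ∅`, and then `T ∩ F = S` is inherited from any member of `𝒰`.
-/

open Submodule

theorem Algebra.mem_adjoin_nonUnitalSubalgebra_iff {R A : Type*} [CommSemiring R] [Semiring A]
    [Algebra R A] (N : NonUnitalSubalgebra R A) {x : A} :
    x ∈ Algebra.adjoin R (N : Set A) ↔ ∃ r : R, ∃ y ∈ N, r • 1 + y = x := by
  have hspan : Subalgebra.toSubmodule (Algebra.adjoin R (N : Set A)) = R ∙ 1 ⊔ N.toSubmodule := by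
    rw [Algebra.adjoin_eq_span, Submonoid.closure_eq_one_union, span_union,
      ← NonUnitalAlgebra.adjoin_eq_span, NonUnitalAlgebra.adjoin_eq]
  rw [← Subalgebra.mem_toSubmodule, hspan, mem_sup]
  simp only [mem_span_singleton, NonUnitalSubalgebra.mem_toSubmodule]
  constructor
  · rintro ⟨_, ⟨r, rfl⟩, y, hy, rfl⟩
    exact ⟨r, y, hy, rfl⟩
  · rintro ⟨r, y, hy, rfl⟩
    exact ⟨_, ⟨r, rfl⟩, y, hy, rfl⟩

theorem IsLocalization.exists_smul_mem_span_of_mem_span {R : Type*} [CommSemiring R]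
    (M : Submonoid R) {S : Type*} [CommSemiring S] [Algebra R S] [IsLocalization M S]
    {N : Type*} [AddCommMonoid N] [Module R N] [Module S N] [IsScalarTower R S N]
    {X : Set N} {x : N} (hx : x ∈ span S X) : ∃ d : M, (d : R) • x ∈ span R X := by
  obtain ⟨y, hy, d, rfl⟩ := (IsLocalization.mem_span_iff M).1 hx
  refine ⟨d, ?_⟩
  rwa [← algebraMap_smul S (d : R), smul_smul, mul_comm, IsLocalization.mk'_spec, map_one,
    one_smul]

theorem exists_ne_zero_not_dvd {S : Type*} [CommRing S] [IsDomain S] (hS : ¬ IsField S)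
    {p : S} (hp : p ≠ 0) : ∃ s : S, s ≠ 0 ∧ ¬ s ∣ p := by
  obtain ⟨a, ha, ha_unit⟩ := Ring.exists_not_isUnit_of_not_isField hS
  refine ⟨a * p, mul_ne_zero ha hp, fun ⟨c, hc⟩ => ha_unit (IsUnit.of_mul_eq_one c ?_)⟩
  exact mul_left_cancel₀ hp (by linear_combination hc.symm)

theorem Module.Basis.exists_eq_smul_of_repr_mul_eq {ι K V : Type*} [Field K] [AddCommGroup V]
    [Module K V] (b : Module.Basis ι K V) {x y : V} (hy : y ≠ 0)
    (h : ∀ i j, b.repr x i * b.repr y j = b.repr x j * b.repr y i) : ∃ c : K, x = c • y := by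
  obtain ⟨k, hk⟩ : ∃ k, b.repr y k ≠ 0 := by
    by_contra! h0
    exact hy (b.repr.injective (Finsupp.ext fun k => by simp [h0 k]))
  refine ⟨b.repr x k * (b.repr y k)⁻¹, b.repr.injective (Finsupp.ext fun l => ?_)⟩
  rw [map_smul, Finsupp.smul_apply, smul_eq_mul]
  field_simp
  exact h l k

theorem IsChain.mem_of_le_sInf {α : Type*} [CompleteLattice α] {P : α → Prop} {𝒰 : Set α}
    (hchain : IsChain (· ≤ ·) 𝒰) (h𝒰 : ∀ R ∈ 𝒰, P R)
    (hmax : ∀ 𝒱 : Set α, 𝒰 ⊆ 𝒱 → (∀ R ∈ 𝒱, P R) → IsChain (· ≤ ·) 𝒱 → 𝒱 = 𝒰)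
    {R : α} (hR : P R) (hle : R ≤ sInf 𝒰) : R ∈ 𝒰 := by
  have hins : insert R 𝒰 = 𝒰 :=
    hmax _ (Set.subset_insert R 𝒰) (Set.forall_mem_insert.2 ⟨hR, h𝒰⟩)
      (hchain.insert fun R' hR' _ => Or.inl (hle.trans (sInf_le hR')))
  exact hins ▸ Set.mem_insert R 𝒰

theorem exists_mem_notMem_range_of_span_eq_top {F A : Type*} [Field F] [Ring A] [Algebra F A]
    {X : Set A} (hX : span F X = ⊤) (hA : ¬ Function.Surjective (algebraMap F A)) :
    ∃ t ∈ X, t ∉ Set.range (algebraMap F A) := by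
  by_contra! h
  refine hA fun a => ?_
  have hle : span F X ≤ LinearMap.range (Algebra.linearMap F A) := span_le.2 h
  exact hle (hX ▸ mem_top : a ∈ span F X)

namespace Submodule

variable {S A : Type*} [CommSemiring S] [Semiring A] [Algebra S A]

def scaledStabilizer (M : Submodule S A) (s : S) : NonUnitalSubalgebra S A where
  carrier := {a | ∀ m ∈ M, ∃ m' ∈ M, a * m = s • m'}
  add_mem' := by
    rintro a a' ha ha' m hm
    obtain ⟨m₁, hm₁, e₁⟩ := ha m hm
    obtain ⟨m₂, hm₂, e₂⟩ := ha' m hm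
    exact ⟨m₁ + m₂, add_mem hm₁ hm₂, by rw [add_mul, e₁, e₂, smul_add]⟩
  zero_mem' := fun m hm => ⟨0, zero_mem M, by rw [zero_mul, smul_zero]⟩
  mul_mem' := by
    rintro a a' ha ha' m hm
    obtain ⟨m₁, hm₁, e₁⟩ := ha' m hm
    obtain ⟨m₂, hm₂, e₂⟩ := ha m₁ hm₁
    exact ⟨s • m₂, M.smul_mem s hm₂, by rw [mul_assoc, e₁, mul_smul_comm, e₂]⟩
  smul_mem' := by
    rintro σ a ha m hm
    obtain ⟨m', hm', e⟩ := ha m hm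
    exact ⟨σ • m', M.smul_mem σ hm', by rw [smul_mul_assoc, e, smul_comm]⟩

variable {M : Submodule S A} {s : S} {a : A}

theorem smul_mem_scaledStabilizer (ha : a ∈ M.scaledStabilizer 1) :
    s • a ∈ M.scaledStabilizer s := by
  intro m hm
  obtain ⟨m', hm', e⟩ := ha m hm
  exact ⟨m', hm', by rw [smul_mul_assoc, e, one_smul]⟩

theorem span_le_scaledStabilizer_one {B C : Set A}
    (hmul : ∀ c ∈ C, ∀ b ∈ B, c * b ∈ span S B) :
    span S C ≤ ((span S B).scaledStabilizer 1).toSubmodule := by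
  rw [span_le]
  intro c hc m hm
  refine ⟨c * m, ?_, (one_smul S _).symm⟩
  induction hm using span_induction with
  | mem b hb => exact hmul c hc b hb
  | zero => rw [mul_zero]; exact zero_mem _
  | add x y _ _ hx hy => rw [mul_add]; exact add_mem hx hy
  | smul σ x _ hx => rw [mul_smul_comm]; exact smul_mem _ σ hx

end Submodule

namespace IsBasisSet

variable {F A : Type*} [Field F] [Ring A] [Algebra F A] {B : Set A}

noncomputable def basis (hB : IsBasisSet F B) : Module.Basis B F A :=
  .mk hB.1 (by rw [Subtype.range_coe, hB.2])

theorem range_basis (hB : IsBasisSet F B) : Set.range hB.basis = B := by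
  rw [basis, Module.Basis.coe_mk, Subtype.range_coe]

theorem basis_repr_self (hB : IsBasisSet F B) (b : B) : hB.basis.repr b = Finsupp.single b 1 := by
  simpa [basis] using hB.basis.repr_self b

theorem repr_mem_range_of_mem_span {S : Type*} [CommRing S] [IsDomain S] [Algebra S F]
    [Module.IsTorsionFree S F] [Algebra S A] [IsScalarTower S F A]
    (hB : IsBasisSet F B) {m : A} (hm : m ∈ span S B) (b : B) :
    hB.basis.repr m b ∈ Set.range (algebraMap S F) := by
  rw [← hB.range_basis] at hm
  exact (hB.basis.mem_span_iff_repr_mem S m).1 hm b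

end IsBasisSet

section Functional

variable {S F A : Type*} [CommRing S] [Field F] [Ring A] [Algebra S F] [Algebra F A] [Algebra S A]
    [IsScalarTower S F A]

theorem exists_mul_eq_of_mem_adjoin_scaledStabilizer {M : Submodule S A} {s d : S}
    (hd : d • (1 : A) ∈ M) (φ : A →ₗ[F] F) (hφ1 : φ 1 = 0)
    (hφM : ∀ m ∈ M, φ m ∈ Set.range (algebraMap S F)) {t : A}
    (ht : t ∈ Algebra.adjoin S (M.scaledStabilizer s : Set A)) :
    ∃ τ : S, algebraMap S F d * φ t = algebraMap S F (s * τ) := by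
  obtain ⟨σ, z, hz, rfl⟩ := (Algebra.mem_adjoin_nonUnitalSubalgebra_iff _).1 ht
  obtain ⟨m', hm', e⟩ := hz _ hd
  obtain ⟨τ, hτ⟩ := hφM m' hm'
  refine ⟨τ, ?_⟩
  rw [mul_smul_comm, mul_one] at e
  have hφe := congr_arg φ e
  rw [φ.map_smul_of_tower, φ.map_smul_of_tower] at hφe
  rw [map_add, φ.map_smul_of_tower, hφ1, smul_zero, zero_add, map_mul, hτ, ← Algebra.smul_def,
    ← Algebra.smul_def, hφe]

end Functional

section NiceSubalgebra

variable {S F A : Type*} [CommRing S] [IsDomain S] [Field F] [Ring A]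
    [Algebra S F] [IsFractionRing S F] [Algebra F A] [Algebra S A] [IsScalarTower S F A]

theorem mem_range_of_algebraMap_mem_scaledStabilizer [Nontrivial A] {B : Set A}
    (hB : IsBasisSet F B) {s : S} {x : F}
    (hx : algebraMap F A x ∈ (span S B).scaledStabilizer s) :
    x ∈ Set.range (algebraMap S F) := by
  obtain ⟨b⟩ := hB.basis.index_nonempty
  obtain ⟨m', hm', e⟩ := hx b (subset_span b.2)
  obtain ⟨τ, hτ⟩ := hB.repr_mem_range_of_mem_span hm' b
  refine ⟨s * τ, ?_⟩
  have := congr_arg (fun a => hB.basis.repr a b) e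
  simp only [← Algebra.smul_def, ← algebraMap_smul F s m', map_smul, hB.basis_repr_self] at this
  rw [Finsupp.smul_apply, Finsupp.smul_apply, Finsupp.single_eq_same, smul_eq_mul, smul_eq_mul,
    mul_one, ← hτ, ← map_mul] at this
  exact this.symm

theorem isNice_adjoin_inf_scaledStabilizer [Nontrivial A] {B C : Set A} (hB : IsBasisSet F B)
    (hC : span F C = ⊤) (hmul : ∀ c ∈ C, ∀ b ∈ B, c * b ∈ span S B) {s : S} (hs : s ≠ 0)
    {T : Subalgebra S A} (hT : span F (T : Set A) = ⊤) :
    IsNice S F (Algebra.adjoin S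
      ((T.toNonUnitalSubalgebra ⊓ (span S B).scaledStabilizer s : NonUnitalSubalgebra S A) :
        Set A)) := by
  refine ⟨fun x => ⟨fun hx => ?_, ?_⟩, ?_⟩
  · obtain ⟨σ, z, hz, e⟩ := (Algebra.mem_adjoin_nonUnitalSubalgebra_iff _).1 hx
    have hz_eq : z = algebraMap F A (x - algebraMap S F σ) := by
      rw [map_sub, ← e, ← IsScalarTower.algebraMap_apply, Algebra.algebraMap_eq_smul_one]
      abel
    obtain ⟨τ, hτ⟩ := mem_range_of_algebraMap_mem_scaledStabilizer hB (hz_eq ▸ hz.2)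
    exact ⟨σ + τ, by rw [map_add, hτ, add_sub_cancel]⟩
  · rintro ⟨τ, rfl⟩
    rw [← IsScalarTower.algebraMap_apply]
    exact Subalgebra.algebraMap_mem _ τ
  · rw [eq_top_iff, ← hT, span_le]
    intro a ha
    obtain ⟨d, hd⟩ := IsLocalization.exists_smul_mem_span_of_mem_span (nonZeroDivisors S)
      (hC ▸ mem_top : a ∈ span F C)
    have hsd : (s * d) • a ∈ Algebra.adjoin S
        ((T.toNonUnitalSubalgebra ⊓ (span S B).scaledStabilizer s : NonUnitalSubalgebra S A) :
          Set A) := by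
      refine Algebra.subset_adjoin ⟨T.smul_mem ha _, ?_⟩
      rw [mul_smul]
      exact smul_mem_scaledStabilizer (span_le_scaledStabilizer_one hmul hd)
    have hsd0 : algebraMap S F (s * d) ≠ 0 :=
      (map_ne_zero_iff _ (IsFractionRing.injective S F)).2
        (mul_ne_zero hs (nonZeroDivisors.coe_ne_zero d))
    rw [← inv_smul_smul₀ hsd0 a, algebraMap_smul]
    exact smul_mem _ _ (subset_span hsd)

theorem exists_linearMap_map_one_eq_zero_of_notMem_range [Nontrivial A] {B : Set A}
    (hB : IsBasisSet F B) {d : S} (hd0 : d ≠ 0) (hd : d • (1 : A) ∈ span S B) {t : A}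
    (ht : t ∉ Set.range (algebraMap F A)) :
    ∃ φ : A →ₗ[F] F, φ 1 = 0 ∧ (∀ m ∈ span S B, φ m ∈ Set.range (algebraMap S F)) ∧ φ t ≠ 0 := by
  set b := hB.basis
  set u := d • (1 : A)
  have hd0' : algebraMap S F d ≠ 0 := (map_ne_zero_iff _ (IsFractionRing.injective S F)).2 hd0
  have hu : u = algebraMap S F d • (1 : A) := (algebraMap_smul F d (1 : A)).symm
  obtain ⟨i, j, hij⟩ : ∃ i j, b.repr t i * b.repr u j ≠ b.repr t j * b.repr u i := by
    by_contra! h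
    have hu0 : u ≠ 0 := by rw [hu]; exact smul_ne_zero hd0' one_ne_zero
    obtain ⟨c, rfl⟩ := b.exists_eq_smul_of_repr_mul_eq hu0 h
    exact ht ⟨c * algebraMap S F d, by rw [Algebra.algebraMap_eq_smul_one, hu, smul_smul]⟩
  let φ : A →ₗ[F] F := b.repr u j • b.coord i - b.repr u i • b.coord j
  have hφ : ∀ a, φ a = b.repr a i * b.repr u j - b.repr a j * b.repr u i := fun a => by
    simp only [φ, LinearMap.sub_apply, LinearMap.smul_apply, Module.Basis.coord_apply, smul_eq_mul]
    ring
  refine ⟨φ, ?_, fun m hm => ?_, by rw [hφ]; exact sub_ne_zero.2 hij⟩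
  · have hφu : φ u = 0 := by rw [hφ]; ring
    rwa [hu, map_smul, smul_eq_zero, or_iff_right hd0'] at hφu
  · obtain ⟨μi, hμi⟩ := hB.repr_mem_range_of_mem_span hm i
    obtain ⟨μj, hμj⟩ := hB.repr_mem_range_of_mem_span hm j
    obtain ⟨νi, hνi⟩ := hB.repr_mem_range_of_mem_span hd i
    obtain ⟨νj, hνj⟩ := hB.repr_mem_range_of_mem_span hd j
    exact ⟨μi * νj - μj * νi, by rw [hφ, ← hμi, ← hμj, ← hνi, ← hνj]; simp only [map_sub, map_mul]⟩

theorem exists_isNice_lt (hS : ¬ IsField S) (hA : ¬ Function.Surjective (algebraMap F A))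
    {B C : Set A} (hB : IsBasisSet F B) (hC : span F C = ⊤)
    (hmul : ∀ c ∈ C, ∀ b ∈ B, c * b ∈ span S B) {T : Subalgebra S A}
    (hT : span F (T : Set A) = ⊤) : ∃ R : Subalgebra S A, IsNice S F R ∧ R < T := by
  obtain ⟨t₀, ht₀T, ht₀⟩ := exists_mem_notMem_range_of_span_eq_top hT hA
  have : Nontrivial A := nontrivial_of_ne t₀ 0 fun h => ht₀ ⟨0, by rw [h, map_zero]⟩
  obtain ⟨e, he⟩ := IsLocalization.exists_smul_mem_span_of_mem_span (nonZeroDivisors S)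
    (hB.2 ▸ mem_top : t₀ ∈ span F B)
  have ht : (e : S) • t₀ ∉ Set.range (algebraMap F A) := by
    rintro ⟨x, hx⟩
    have he0 : algebraMap S F e ≠ 0 :=
      (map_ne_zero_iff _ (IsFractionRing.injective S F)).2 (nonZeroDivisors.coe_ne_zero e)
    refine ht₀ ⟨(algebraMap S F e)⁻¹ * x, ?_⟩
    rw [Algebra.algebraMap_eq_smul_one, mul_smul, ← Algebra.algebraMap_eq_smul_one, hx,
      ← algebraMap_smul F (e : S), inv_smul_smul₀ he0]
  obtain ⟨d, hd⟩ := IsLocalization.exists_smul_mem_span_of_mem_span (nonZeroDivisors S)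
    (hB.2 ▸ mem_top : (1 : A) ∈ span F B)
  obtain ⟨φ, hφ1, hφM, hφt⟩ :=
    exists_linearMap_map_one_eq_zero_of_notMem_range hB (nonZeroDivisors.coe_ne_zero d) hd ht
  obtain ⟨p, hp⟩ := hφM _ he
  have hp0 : p ≠ 0 := by rintro rfl; exact hφt (by rw [← hp, map_zero])
  obtain ⟨s, hs, hdvd⟩ :=
    exists_ne_zero_not_dvd hS (mul_ne_zero (nonZeroDivisors.coe_ne_zero d) hp0)
  refine ⟨_, isNice_adjoin_inf_scaledStabilizer hB hC hmul hs hT,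
    lt_of_le_not_ge (Algebra.adjoin_le inf_le_left) fun hle => hdvd ?_⟩
  obtain ⟨τ, hτ⟩ := exists_mul_eq_of_mem_adjoin_scaledStabilizer hd φ hφ1 hφM
    (Algebra.adjoin_mono inf_le_right (hle (T.smul_mem ht₀T (e : S))))
  exact ⟨τ, IsFractionRing.injective S F (by rw [map_mul, hp, hτ])⟩

end NiceSubalgebra

/-- Suppose `A ≠ F` has an `S`-stable basis and `𝒰` is a maximal chain of
`S`-nice subalgebras of `A`. Then `T = ⋂_{R ∈ 𝒰} R` lies over `S` (`T ∩ F = S`) but is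
not `S`-nice: its localization `TF` is a proper subalgebra of `A`. -/
theorem stmt16 {S F A : Type*} [CommRing S] [IsDomain S] [Field F] [Ring A]
    [Algebra S F] [IsFractionRing S F] [Algebra F A] [Algebra S A] [IsScalarTower S F A]
    (hS : ¬ IsField S) (hA : ¬ Function.Surjective (algebraMap F A))
    (hstable : ∃ B : Set A, IsStableBasis S F B)
    (𝒰 : Set (Subalgebra S A)) (h𝒰 : ∀ R ∈ 𝒰, IsNice S F R)
    (hchain : IsChain (· ≤ ·) 𝒰)
    (hmax : ∀ 𝒱 : Set (Subalgebra S A), 𝒰 ⊆ 𝒱 → (∀ R ∈ 𝒱, IsNice S F R) →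
      IsChain (· ≤ ·) 𝒱 → 𝒱 = 𝒰) :
    (∀ x : F, algebraMap F A x ∈ sInf 𝒰 ↔ ∃ s : S, algebraMap S F s = x) ∧
      Submodule.span F ((sInf 𝒰 : Subalgebra S A) : Set A) ≠ ⊤ := by
  obtain ⟨B, hB, C, hC, hmul⟩ := hstable
  have hspan : span F ((sInf 𝒰 : Subalgebra S A) : Set A) ≠ ⊤ := fun hT => by
    obtain ⟨R, hR, hRT⟩ := exists_isNice_lt hS hA hB hC.2 hmul hT
    exact hRT.not_ge (sInf_le (hchain.mem_of_le_sInf h𝒰 hmax hR hRT.le))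
  obtain ⟨R₀, hR₀⟩ : 𝒰.Nonempty := by
    rw [Set.nonempty_iff_ne_empty]
    rintro rfl
    exact hspan (by simp)
  refine ⟨fun x => ⟨fun hx => ((h𝒰 R₀ hR₀).1 x).1 (Algebra.mem_sInf.1 hx R₀ hR₀), ?_⟩, hspan⟩
  rintro ⟨τ, rfl⟩
  rw [← IsScalarTower.algebraMap_apply]
  exact Subalgebra.algebraMap_mem _ τ
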